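/- arXiv:2501.07941 — 2 statements merged into one kernel-verified Lean document; each statement's English description precedes it below -/
import Mathlib

section
/- Let B be a finite integer interval, and let A' ⊆ A'' be integer intervals such that A' is bounded below and every element of A''∖A' is strictly smaller than every element of A'; write A''∖A' = {x ∈ ℤ : a ≤ x ≤ b} and set c = min(b, 0). Let E ∈ B(A'',B) be the {0,1}-matrix whose entries equal 1 exactly in the positions (i, j) with a ≤ i ≤ c and j ∈ B. Then for every M ∈ B(A',B), regarded as an element of B(A'',B) by extending by zeros, one has the identity w_M · w_E = w_{M'} in W(A'',B), where M' ∈ B(A'',B) is the matrix that agrees with M in rows belonging to A', has all entries equal to 1 in rows i ∈ A''∖A' with i ≤ 0, and has all entries equal to 0 in rows i ∈ A''∖A' with i > 0. -/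
noncomputable section

/-- The base field `F = ℚ(q)`. -/
abbrev FF : Type := RatFunc ℚ

/-- The indeterminate `q`. -/
def qq : FF := RatFunc.X

/-- Defining relations of the q-deformed exterior algebra `W(A,B)`, on the free algebra
on generators `w(a,b)`, `(a,b) ∈ A × B`. -/
inductive WRel (A B : Set ℤ) :
    FreeAlgebra FF (↥A × ↥B) → FreeAlgebra FF (↥A × ↥B) → Prop
  | sq (a : ↥A) (b : ↥B) :
      WRel A B (FreeAlgebra.ι FF ((a, b) : ↥A × ↥B) * FreeAlgebra.ι FF ((a, b) : ↥A × ↥B)) 0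
  | col (a c : ↥A) (b : ↥B) (h : (c : ℤ) < (a : ℤ)) :
      WRel A B (FreeAlgebra.ι FF ((a, b) : ↥A × ↥B) * FreeAlgebra.ι FF ((c, b) : ↥A × ↥B))
        (-(qq • (FreeAlgebra.ι FF ((c, b) : ↥A × ↥B) * FreeAlgebra.ι FF ((a, b) : ↥A × ↥B))))
  | row (a : ↥A) (b d : ↥B) (h : (b : ℤ) < (d : ℤ)) :
      WRel A B (FreeAlgebra.ι FF ((a, b) : ↥A × ↥B) * FreeAlgebra.ι FF ((a, d) : ↥A × ↥B))
        (qq⁻¹ • (FreeAlgebra.ι FF ((a, d) : ↥A × ↥B) * FreeAlgebra.ι FF ((a, b) : ↥A × ↥B)))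
  | comm (a c : ↥A) (b d : ↥B) (h1 : (a : ℤ) < (c : ℤ)) (h2 : (b : ℤ) < (d : ℤ)) :
      WRel A B (FreeAlgebra.ι FF ((a, b) : ↥A × ↥B) * FreeAlgebra.ι FF ((c, d) : ↥A × ↥B))
        (FreeAlgebra.ι FF ((c, d) : ↥A × ↥B) * FreeAlgebra.ι FF ((a, b) : ↥A × ↥B))
  | str (a c : ↥A) (b d : ↥B) (h1 : (c : ℤ) < (a : ℤ)) (h2 : (b : ℤ) < (d : ℤ)) :
      WRel A B (FreeAlgebra.ι FF ((a, b) : ↥A × ↥B) * FreeAlgebra.ι FF ((c, d) : ↥A × ↥B))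
        (FreeAlgebra.ι FF ((c, d) : ↥A × ↥B) * FreeAlgebra.ι FF ((a, b) : ↥A × ↥B) -
          (qq - qq⁻¹) •
            (FreeAlgebra.ι FF ((c, b) : ↥A × ↥B) * FreeAlgebra.ι FF ((a, d) : ↥A × ↥B)))

/-- The q-deformed exterior algebra `W(A,B)`. -/
abbrev WAlg (A B : Set ℤ) : Type := RingQuot (WRel A B)

/-- The generator `w(a,b)` of `W(A,B)`. -/
def wg (A B : Set ℤ) (p : ↥A × ↥B) : WAlg A B :=
  RingQuot.mkAlgHom FF (WRel A B) (FreeAlgebra.ι FF p)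

/-- The total order on positions: `(a,b) < (c,d)` iff `b < d`, or `b = d` and `a > c`;
`wr` is the associated reflexive total relation (`≤`). -/
def wr (A B : Set ℤ) (p q : ↥A × ↥B) : Prop :=
  (p.2 : ℤ) < (q.2 : ℤ) ∨ ((p.2 : ℤ) = (q.2 : ℤ) ∧ (q.1 : ℤ) ≤ (p.1 : ℤ))

instance (A B : Set ℤ) : DecidableRel (wr A B) := fun p q => by
  unfold wr; infer_instance

instance (A B : Set ℤ) : IsTrans (↥A × ↥B) (wr A B) := by
  constructor
  intro p q r h1 h2
  unfold wr at h1 h2 ⊢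
  rcases h1 with h1 | ⟨h1, h1'⟩ <;> rcases h2 with h2 | ⟨h2, h2'⟩
  · exact Or.inl (by linarith)
  · exact Or.inl (by linarith)
  · exact Or.inl (by linarith)
  · exact Or.inr ⟨by linarith, by linarith⟩

instance (A B : Set ℤ) : IsAntisymm (↥A × ↥B) (wr A B) := by
  constructor
  intro p q h1 h2
  unfold wr at h1 h2
  have hb : (p.2 : ℤ) = (q.2 : ℤ) := by
    rcases h1 with h1 | ⟨h1, h1'⟩ <;> rcases h2 with h2 | ⟨h2, h2'⟩ <;> linarith
  have ha : (p.1 : ℤ) = (q.1 : ℤ) := by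
    rcases h1 with h1 | ⟨h1, h1'⟩ <;> rcases h2 with h2 | ⟨h2, h2'⟩ <;> linarith
  exact Prod.ext_iff.mpr ⟨Subtype.ext ha, Subtype.ext hb⟩

instance (A B : Set ℤ) : IsTotal (↥A × ↥B) (wr A B) := by
  constructor
  intro p q
  unfold wr
  rcases lt_trichotomy ((p.2 : ℤ)) ((q.2 : ℤ)) with h | h | h
  · exact Or.inl (Or.inl h)
  · rcases le_total ((q.1 : ℤ)) ((p.1 : ℤ)) with h' | h'
    · exact Or.inl (Or.inr ⟨h, h'⟩)
    · exact Or.inr (Or.inr ⟨h.symm, h'⟩)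
  · exact Or.inr (Or.inl h)

/-- The standard monomial `w_M` attached to a finitely supported `{0,1}`-matrix `M`
(identified with the finite set of positions of its `1` entries): the product of the
generators `w(a,b)` over the positions of `M`, in increasing order for `<`. -/
def wMon (A B : Set ℤ) (M : Finset (↥A × ↥B)) : WAlg A B :=
  ((M.sort (wr A B)).map (wg A B)).prod

/-!
STATEMENT 8.  Let `B` be a finite integer interval, `A' ⊆ A''` integer intervals with `A'`
bounded below and every element of `A'' \ A'` strictly smaller than every element of `A'`;
write `A'' \ A' = {x | a ≤ x ≤ b}` and `c = min b 0`.  Let `E` be the `{0,1}`-matrix with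
`1`'s exactly in positions `(i,j)` with `a ≤ i ≤ c` (and any `j ∈ B`).  For
`M ∈ B(A',B)`, regarded in `B(A'',B)` via extension by zeros, one has
`w_M · w_E = w_{M'}`, where `M'` agrees with `M` on rows in `A'`, has all entries `1` in
rows `i ∈ A'' \ A'` with `i ≤ 0`, and all entries `0` in rows `i ∈ A'' \ A'` with `i > 0`.
-/


section Aux

variable {α : Type*} (r : α → α → Prop) [DecidableRel r]

lemma mem_foldr_orderedInsert (t l₂ : List α) (z : α) :
    z ∈ t.foldr (List.orderedInsert r) l₂ ↔ z ∈ t ∨ z ∈ l₂ := by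
  induction t with
  | nil => simp
  | cons y s ih => simp [List.mem_orderedInsert, ih, or_assoc]

lemma sorted_foldr_orderedInsert [IsTotal α r] [IsTrans α r] (t l₂ : List α)
    (h : l₂.Pairwise r) : (t.foldr (List.orderedInsert r) l₂).Pairwise r := by
  induction t with
  | nil => exact h
  | cons y s ih => exact List.Pairwise.orderedInsert y _ ih

lemma perm_foldr_orderedInsert (t l₂ : List α) :
    (t.foldr (List.orderedInsert r) l₂).Perm (t ++ l₂) := by
  induction t with
  | nil => simp
  | cons y s ih =>
    exact (List.perm_orderedInsert r y _).trans (ih.cons y)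

end Aux

lemma wg_comm (A B : Set ℤ) (p q : ↥A × ↥B) (h1 : (p.1 : ℤ) < (q.1 : ℤ))
    (h2 : (p.2 : ℤ) < (q.2 : ℤ)) :
    wg A B p * wg A B q = wg A B q * wg A B p := by
  have h := RingQuot.mkAlgHom_rel FF (WRel.comm p.1 q.1 p.2 q.2 h1 h2)
  simpa only [wg, map_mul, Prod.mk.eta] using h

lemma mul_prod_orderedInsert (A B : Set ℤ) (x : ↥A × ↥B) (l : List (↥A × ↥B))
    (hcomm : ∀ z ∈ l, wr A B z x → ¬ wr A B x z →
      wg A B x * wg A B z = wg A B z * wg A B x) :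
    wg A B x * ((l.map (wg A B)).prod) =
      ((l.orderedInsert (wr A B) x).map (wg A B)).prod := by
  induction l with
  | nil => simp [List.orderedInsert]
  | cons y t ih =>
    by_cases h : wr A B x y
    · simp [List.orderedInsert, h]
    · have hyx : wr A B y x := (total_of (wr A B) x y).resolve_left h
      have hc := hcomm y (by simp) hyx h
      simp only [List.orderedInsert, if_neg h, List.map_cons, List.prod_cons]
      rw [← mul_assoc, hc, mul_assoc, ih (fun z hz hz1 hz2 => hcomm z (by simp [hz]) hz1 hz2)]

lemma prod_mul_prod_foldr (A B : Set ℤ) (l₁ l₂ : List (↥A × ↥B))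
    (hs : l₁.Pairwise (wr A B))
    (hcomm : ∀ x ∈ l₁, ∀ z ∈ l₂, wr A B z x → ¬ wr A B x z →
      wg A B x * wg A B z = wg A B z * wg A B x) :
    (l₁.map (wg A B)).prod * (l₂.map (wg A B)).prod =
      ((l₁.foldr (List.orderedInsert (wr A B)) l₂).map (wg A B)).prod := by
  induction l₁ with
  | nil => simp
  | cons x t ih =>
    simp only [List.map_cons, List.prod_cons, List.foldr_cons]
    rw [mul_assoc, ih hs.of_cons
      (fun x' hx' z hz hz1 hz2 => hcomm x' (by simp [hx']) z hz hz1 hz2)]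
    apply mul_prod_orderedInsert
    intro z hz hzx hxz
    rcases (mem_foldr_orderedInsert (wr A B) t l₂ z).1 hz with hz' | hz'
    · exact absurd (List.rel_of_pairwise_cons hs hz') hxz
    · exact hcomm x (by simp) z hz' hzx hxz

theorem statement8 (A' A'' B : Set ℤ)
    (hB : B.Nonempty) (hBfin : B.Finite)
    (hBint : ∀ x ∈ B, ∀ y ∈ B, ∀ z : ℤ, x ≤ z → z ≤ y → z ∈ B)
    (hA' : A'.Nonempty)
    (hA'int : ∀ x ∈ A', ∀ y ∈ A', ∀ z : ℤ, x ≤ z → z ≤ y → z ∈ A')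
    (hA''int : ∀ x ∈ A'', ∀ y ∈ A'', ∀ z : ℤ, x ≤ z → z ≤ y → z ∈ A'')
    (hsub : A' ⊆ A'')
    (hbdd : BddBelow A')
    (hsep : ∀ x ∈ A'' \ A', ∀ y ∈ A', x < y)
    (a b : ℤ) (hIcc : A'' \ A' = Set.Icc a b)
    (M E M' : Finset (↥A'' × ↥B))
    (hM : ∀ p ∈ M, (p.1 : ℤ) ∈ A')
    (hE : ∀ p : ↥A'' × ↥B, p ∈ E ↔ (a ≤ (p.1 : ℤ) ∧ (p.1 : ℤ) ≤ min b 0))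
    (hM' : ∀ p : ↥A'' × ↥B, p ∈ M' ↔ (p ∈ M ∨ ((p.1 : ℤ) ∉ A' ∧ (p.1 : ℤ) ≤ 0))) :
    wMon A'' B M * wMon A'' B E = wMon A'' B M' := by
  -- E rows lie outside A' and are <= 0
  have hcE : ∀ p : ↥A'' × ↥B, p ∈ E → (p.1 : ℤ) ∉ A' ∧ (p.1 : ℤ) ≤ 0 := by
    intro p hp
    obtain ⟨h1, h2⟩ := (hE p).1 hp
    have hb0 : (p.1 : ℤ) ≤ b := le_trans h2 (min_le_left _ _)
    have : (p.1 : ℤ) ∈ A'' \ A' := by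
      rw [hIcc]; exact Set.mem_Icc.2 ⟨h1, hb0⟩
    exact ⟨this.2, le_trans h2 (min_le_right _ _)⟩
  have hdisj : Disjoint M E := by
    rw [Finset.disjoint_left]
    intro p hp hp'
    exact (hcE p hp').1 (hM p hp)
  have hM'eq : M' = M.disjUnion E hdisj := by
    apply Finset.ext
    intro p
    rw [hM' p, Finset.mem_disjUnion, hE p]
    constructor
    · rintro (h | ⟨h1, h2⟩)
      · exact Or.inl h
      · have : (p.1 : ℤ) ∈ A'' \ A' := ⟨p.1.2, h1⟩
        rw [hIcc] at this
        exact Or.inr ⟨this.1, le_min this.2 h2⟩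
    · rintro (h | ⟨h1, h2⟩)
      · exact Or.inl h
      · have : (p.1 : ℤ) ∈ A'' \ A' := by
          rw [hIcc]; exact Set.mem_Icc.2 ⟨h1, le_trans h2 (min_le_left _ _)⟩
        exact Or.inr ⟨this.2, le_trans h2 (min_le_right _ _)⟩
  -- the commuting condition
  have hcomm : ∀ x ∈ Finset.sort M (wr A'' B), ∀ z ∈ Finset.sort E (wr A'' B),
      wr A'' B z x → ¬ wr A'' B x z →
      wg A'' B x * wg A'' B z = wg A'' B z * wg A'' B x := by
    intro x hx z hz hzx _
    rw [Finset.mem_sort] at hx hz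
    have hrow : (z.1 : ℤ) < (x.1 : ℤ) :=
      hsep _ ⟨z.1.2, (hcE z hz).1⟩ _ (hM x hx)
    have hcol : (z.2 : ℤ) < (x.2 : ℤ) := by
      rcases hzx with h | ⟨h1, h2⟩
      · exact h
      · exact absurd hrow (not_lt.2 h2)
    exact (wg_comm A'' B z x hrow hcol).symm
  unfold wMon
  rw [prod_mul_prod_foldr A'' B _ _ (Finset.pairwise_sort _ _) hcomm]
  congr 1
  -- the merged list equals the sorted list of M'
  have hperm : ((Finset.sort M (wr A'' B)).foldr (List.orderedInsert (wr A'' B))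
      (Finset.sort E (wr A'' B))).Perm (Finset.sort M' (wr A'' B)) := by
    refine (perm_foldr_orderedInsert _ _ _).trans ?_
    rw [← Multiset.coe_eq_coe, ← Multiset.coe_add, Finset.sort_eq, Finset.sort_eq,
      Finset.sort_eq, hM'eq]
    rfl
  have := List.Perm.eq_of_pairwise'
    (sorted_foldr_orderedInsert _ _ _ (Finset.pairwise_sort _ _))
    (Finset.pairwise_sort _ _) hperm
  rw [this]


end
end

section
/- Let ι : F → F be the field automorphism of ℚ(q) with ι(q) = q^{−1}, and set p = −q^{−1}. For a finite sequence c = (c_1, …, c_k) of integers let l(c) = #{(i,j) : 1 ≤ i < j ≤ k, c_i = c_j}. Then there is a unique map x ↦ x̄ on W(A,B) that is additive, satisfies the semilinearity condition (f·x)‾ = ι(f)·x̄ for all f ∈ F, and satisfies, for every k ≥ 0 and every sequence (c_1,d_1), …, (c_k,d_k) of elements of A×B, the formula (w(c_1,d_1)·w(c_2,d_2)⋯w(c_k,d_k))‾ = q^{−l(c)}·p^{−l(d)}·w(c_k,d_k)⋯w(c_2,d_2)·w(c_1,d_1), where c = (c_1,…,c_k) and d = (d_1,…,d_k). Moreover this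 map is an involution. -/
noncomputable section

/-- `l(c)` for a finite sequence `c = (c_1, …, c_k)`: the number of pairs `(i,j)` with
`i < j` and `c_i = c_j`. -/
def lcount {k : ℕ} (c : Fin k → ℤ) : ℕ :=
  (Finset.univ.filter fun ij : Fin k × Fin k => ij.1 < ij.2 ∧ c ij.1 = c ij.2).card

/-- The defining property of the bar map on `W(A,B)`: additivity, `ι`-semilinearity, and the
explicit formula on products of generators, with `p = -q⁻¹`. -/
def BarProp (A B : Set ℤ) (iota : FF ≃+* FF) (bar : WAlg A B → WAlg A B) : Prop :=
  (∀ x y : WAlg A B, bar (x + y) = bar x + bar y) ∧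
  (∀ (f : FF) (x : WAlg A B), bar (f • x) = iota f • bar x) ∧
  (∀ (k : ℕ) (g : Fin k → ↥A × ↥B),
    bar (List.ofFn fun m : Fin k => wg A B (g m)).prod =
      (qq ^ (-(lcount (fun m : Fin k => ((g m).1 : ℤ)) : ℤ)) *
        (-qq⁻¹) ^ (-(lcount (fun m : Fin k => ((g m).2 : ℤ)) : ℤ))) •
        (List.ofFn fun m : Fin k => wg A B (g m)).reverse.prod)

/-!
STATEMENT 9.  Let `ι : F ≃+* F` be the field automorphism of `ℚ(q)` with `ι q = q⁻¹`, and
`p = -q⁻¹`.  There is a unique map `x ↦ x̄` on `W(A,B)` which is additive, satisfies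
`(f·x)‾ = ι(f)·x̄`, and satisfies
`(w(c_1,d_1)⋯w(c_k,d_k))‾ = q^{-l(c)} p^{-l(d)} w(c_k,d_k)⋯w(c_1,d_1)`.
Moreover this map is an involution.
-/


/-! ### Auxiliary development for Statement 9 -/

section Aux

lemma qq_ne : qq ≠ 0 := RatFunc.X_ne_zero
lemma nqi_ne : (-qq⁻¹ : FF) ≠ 0 := neg_ne_zero.mpr (inv_ne_zero qq_ne)

/-- Pair-count of equal entries in a list. -/
def lpc : List ℤ → ℕ
  | [] => 0
  | a :: t => t.count a + lpc t

lemma lpc_perm : ∀ {l l' : List ℤ}, l.Perm l' → lpc l = lpc l' := by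
  intro l l' h
  induction h with
  | nil => rfl
  | cons a h ih => simp [lpc, ih, h.count_eq]
  | swap a b t =>
    simp only [lpc, List.count_cons]
    have e : (if (a == b) then 1 else 0 : ℕ) = (if (b == a) then 1 else 0) := by
      by_cases h : a = b
      · simp [h]
      · simp [beq_iff_eq, h, Ne.symm h]
    rw [e]
    ring
  | trans h1 h2 ih1 ih2 => exact ih1.trans ih2

lemma count_ofFn {k : ℕ} (f : Fin k → ℤ) (a : ℤ) :
    (List.ofFn f).count a = (Finset.univ.filter fun i => f i = a).card := by
  induction k with
  | zero => simp
  | succ k ih =>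
    rw [List.ofFn_succ, List.count_cons, ih fun i => f i.succ]
    rw [Finset.card_filter, Finset.card_filter, Fin.sum_univ_succ]
    have hc : ∀ b : ℤ, (a = b) ↔ (b = a) := fun b => eq_comm
    simp [beq_iff_eq, hc, add_comm]

lemma lcount_succ {k : ℕ} (c : Fin (k + 1) → ℤ) :
    lcount c = (Finset.univ.filter fun j : Fin k => c j.succ = c 0).card
      + lcount (fun i => c i.succ) := by
  unfold lcount
  rw [Finset.card_filter, Finset.card_filter, Finset.card_filter,
    ← Finset.univ_product_univ, Finset.sum_product, ← Finset.univ_product_univ,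
    Finset.sum_product, Fin.sum_univ_succ]
  congr 1
  · rw [Fin.sum_univ_succ]
    simp [Fin.succ_pos, eq_comm]
  · refine Finset.sum_congr rfl fun i _ => ?_
    rw [Fin.sum_univ_succ]
    simp [Fin.succ_lt_succ_iff]

lemma lp_ofFn {k : ℕ} (c : Fin k → ℤ) : lpc (List.ofFn c) = lcount c := by
  induction k with
  | zero => simp [lpc, lcount]
  | succ k ih =>
    rw [List.ofFn_succ]
    show (List.ofFn fun i => c i.succ).count (c 0) + lpc (List.ofFn fun i => c i.succ) = _
    rw [count_ofFn, ih, lcount_succ]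

section iota
variable (iota : FF ≃+* FF) (hiota : iota qq = qq⁻¹)
include hiota

lemma iota_inv_qq : iota qq⁻¹ = qq := by rw [map_inv₀, hiota, inv_inv]

lemma iota_nqi : iota (-qq⁻¹) = -qq := by rw [map_neg, iota_inv_qq iota hiota]

lemma iota_iota (f : FF) : iota (iota f) = f := by
  have h : (iota.toRingHom.comp iota.toRingHom) = RingHom.id FF := by
    refine IsLocalization.ringHom_ext (nonZeroDivisors (Polynomial ℚ)) ?_
    refine Polynomial.ringHom_ext ?_ ?_
    · intro a
      simp only [RingHom.coe_comp, Function.comp_apply, RingHom.id_apply]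
      have h1 : (algebraMap (Polynomial ℚ) FF) (Polynomial.C a) = (a : FF) := by
        rw [RatFunc.algebraMap_C]
        exact map_ratCast RatFunc.C a
      rw [h1]
      simp [map_ratCast]
    · simp only [RingHom.coe_comp, Function.comp_apply, RingHom.id_apply]
      rw [RatFunc.algebraMap_X]
      show iota (iota qq) = qq
      rw [hiota, iota_inv_qq iota hiota]
  exact RingHom.congr_fun h f

lemma iota_scal (n m : ℕ) :
    iota (qq ^ (-(n : ℤ)) * (-qq⁻¹) ^ (-(m : ℤ))) *
      (qq ^ (-(n : ℤ)) * (-qq⁻¹) ^ (-(m : ℤ))) = 1 := by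
  rw [map_mul, map_zpow₀, map_zpow₀, hiota, iota_nqi iota hiota]
  have h1 : (qq ^ (-(n : ℤ)) : FF) ≠ 0 := zpow_ne_zero _ qq_ne
  have h2 : ((-qq⁻¹ : FF) ^ (-(m : ℤ)) : FF) ≠ 0 := zpow_ne_zero _ nqi_ne
  have e1 : (qq⁻¹ : FF) ^ (-(n : ℤ)) = (qq ^ (-(n : ℤ)))⁻¹ := by rw [inv_zpow]
  have e2 : (-qq : FF) ^ (-(m : ℤ)) = ((-qq⁻¹ : FF) ^ (-(m : ℤ)))⁻¹ := by
    rw [← inv_zpow, inv_neg, inv_inv]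
  rw [e1, e2, mul_mul_mul_comm, inv_mul_cancel₀ h1, inv_mul_cancel₀ h2, one_mul]

end iota

variable {A B : Set ℤ}

/-- The product of the free generators along a word. -/
def wordF (l : List (↥A × ↥B)) : FreeAlgebra FF (↥A × ↥B) :=
  (l.map (FreeAlgebra.ι FF)).prod

/-- The product of the generators of `W(A,B)` along a word. -/
def wgp (l : List (↥A × ↥B)) : WAlg A B := (l.map (wg A B)).prod

lemma wordF_append (l1 l2 : List (↥A × ↥B)) : wordF (l1 ++ l2) = wordF l1 * wordF l2 := by
  simp [wordF]

lemma wgp_append (l1 l2 : List (↥A × ↥B)) :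
    (wgp (l1 ++ l2) : WAlg A B) = wgp l1 * wgp l2 := by
  simp [wgp]

lemma mkAlgHom_wordF (l : List (↥A × ↥B)) :
    RingQuot.mkAlgHom FF (WRel A B) (wordF l) = wgp l := by
  rw [wordF, wgp, map_list_prod, List.map_map]
  rfl

lemma equiv_wordF (l : List (↥A × ↥B)) :
    (FreeAlgebra.equivMonoidAlgebraFreeMonoid (R := FF) (X := ↥A × ↥B)) (wordF l) =
      MonoidAlgebra.single (FreeMonoid.ofList l) 1 := by
  induction l with
  | nil =>
    show _ = (1 : MonoidAlgebra FF (FreeMonoid (↥A × ↥B)))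
    simp [wordF]
  | cons p t ih =>
    have h1 : wordF (p :: t) = FreeAlgebra.ι FF p * wordF t := by simp [wordF]
    have h2 : (FreeAlgebra.equivMonoidAlgebraFreeMonoid (R := FF) (X := ↥A × ↥B))
        (FreeAlgebra.ι FF p) = MonoidAlgebra.single (FreeMonoid.of p) 1 := by
      simp [FreeAlgebra.equivMonoidAlgebraFreeMonoid]
    rw [h1, map_mul, h2, ih, MonoidAlgebra.single_mul_single, one_mul]
    rfl

lemma symm_ofW (g : FreeMonoid (↥A × ↥B)) :
    (FreeAlgebra.equivMonoidAlgebraFreeMonoid (R := FF) (X := ↥A × ↥B)).symm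
      (MonoidAlgebra.of FF (FreeMonoid (↥A × ↥B)) g) = wordF (FreeMonoid.toList g) := by
  have h : MonoidAlgebra.of FF (FreeMonoid (↥A × ↥B)) g =
      (FreeAlgebra.equivMonoidAlgebraFreeMonoid (R := FF) (X := ↥A × ↥B))
        (wordF (FreeMonoid.toList g)) := by
    rw [equiv_wordF, FreeMonoid.ofList_toList, MonoidAlgebra.of_apply]
  rw [h, AlgEquiv.symm_apply_apply]

/-- The scalar coefficient attached to a word. -/
def factor (l : List (↥A × ↥B)) : FF :=
  qq ^ (-(lpc (l.map fun p => ((p.1 : ℤ))) : ℤ)) *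
    (-qq⁻¹) ^ (-(lpc (l.map fun p => ((p.2 : ℤ))) : ℤ))

lemma factor_congr {l l' : List (↥A × ↥B)}
    (hc : ((l.map fun p => ((p.1 : ℤ)))).Perm (l'.map fun p => ((p.1 : ℤ))))
    (hr : ((l.map fun p => ((p.2 : ℤ)))).Perm (l'.map fun p => ((p.2 : ℤ)))) :
    factor l = factor l' := by
  unfold factor
  rw [lpc_perm hc, lpc_perm hr]

lemma factor_reverse (l : List (↥A × ↥B)) : factor l.reverse = factor l :=
  factor_congr ((l.reverse_perm).map _) ((l.reverse_perm).map _)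

/-- The bar map on words. -/
def barW (l : List (↥A × ↥B)) : WAlg A B := factor l • wgp l.reverse

variable (iota : FF ≃+* FF)

/-- The candidate bar map, on the free algebra. -/
def bar0 (x : FreeAlgebra FF (↥A × ↥B)) : WAlg A B :=
  ((FreeAlgebra.equivMonoidAlgebraFreeMonoid (R := FF) (X := ↥A × ↥B)) x).coeff.sum
    fun w f => iota f • barW (FreeMonoid.toList w)

lemma bar0_zero : bar0 (A := A) (B := B) iota 0 = 0 := by
  rw [bar0, map_zero, MonoidAlgebra.coeff_zero, Finsupp.sum_zero_index]

lemma bar0_add (x y : FreeAlgebra FF (↥A × ↥B)) :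
    bar0 iota (x + y) = bar0 iota x + bar0 iota y := by
  rw [bar0, bar0, bar0, map_add, MonoidAlgebra.coeff_add]
  exact Finsupp.sum_add_index' (fun w => by simp) (fun w f g => by simp [add_smul])

lemma bar0_smul (f : FF) (x : FreeAlgebra FF (↥A × ↥B)) :
    bar0 iota (f • x) = iota f • bar0 iota x := by
  rw [bar0, bar0, map_smul, MonoidAlgebra.coeff_smul]
  rw [Finsupp.sum_smul_index' (fun w => by simp)]
  rw [Finsupp.smul_sum]
  exact Finsupp.sum_congr fun w _ => by rw [smul_eq_mul, map_mul, mul_smul]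

lemma bar0_neg (x : FreeAlgebra FF (↥A × ↥B)) : bar0 iota (-x) = -bar0 iota x := by
  rw [← neg_one_smul FF x, bar0_smul, map_neg, map_one]
  exact neg_one_smul FF (bar0 iota x)

lemma bar0_sub (x y : FreeAlgebra FF (↥A × ↥B)) :
    bar0 iota (x - y) = bar0 iota x - bar0 iota y := by
  rw [sub_eq_add_neg, bar0_add, bar0_neg, sub_eq_add_neg]

lemma bar0_word (l : List (↥A × ↥B)) : bar0 iota (wordF l) = barW l := by
  rw [bar0, equiv_wordF, MonoidAlgebra.coeff_single, Finsupp.sum_single_index (by simp)]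
  simp

lemma bar0_mid (lx ly : List (↥A × ↥B)) (p1 p2 : ↥A × ↥B) :
    bar0 iota (wordF lx * (FreeAlgebra.ι FF p1 * FreeAlgebra.ι FF p2) * wordF ly) =
      factor (lx ++ p1 :: p2 :: ly) •
        (wgp ly.reverse * (wg A B p2 * wg A B p1) * wgp lx.reverse) := by
  have h1 : wordF lx * (FreeAlgebra.ι FF p1 * FreeAlgebra.ι FF p2) * wordF ly
      = wordF (lx ++ p1 :: p2 :: ly) := by
    simp [wordF, mul_assoc]
  rw [h1, bar0_word, barW]
  congr 1
  have h2 : (lx ++ p1 :: p2 :: ly).reverse = (ly.reverse ++ [p2, p1]) ++ lx.reverse := by simp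
  rw [h2, wgp_append, wgp_append]
  simp [wgp, mul_assoc]

lemma factor_midswap (lx ly : List (↥A × ↥B)) (p1 p2 : ↥A × ↥B) :
    factor (lx ++ p1 :: p2 :: ly) = factor (lx ++ p2 :: p1 :: ly) := by
  refine factor_congr ?_ ?_ <;>
  · simp only [List.map_append, List.map_cons]
    exact List.Perm.append_left _ (List.Perm.swap _ _ _)

/-- The relations of `W(A,B)`, as identities between generators. -/
lemma Wsq (a : ↥A) (b : ↥B) :
    wg A B (a, b) * wg A B (a, b) = 0 := by
  have h := RingQuot.mkAlgHom_rel FF (WRel.sq a b)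
  simpa [wg, map_mul] using h

lemma Wcol (a c : ↥A) (b : ↥B) (h : (c : ℤ) < (a : ℤ)) :
    wg A B (a, b) * wg A B (c, b) = -(qq • (wg A B (c, b) * wg A B (a, b))) := by
  have h2 := RingQuot.mkAlgHom_rel FF (WRel.col a c b h)
  simpa [wg, map_mul, map_smul, map_neg] using h2

lemma Wcol' (a c : ↥A) (b : ↥B) (h : (c : ℤ) < (a : ℤ)) :
    wg A B (a, b) * wg A B (c, b) = (-qq) • (wg A B (c, b) * wg A B (a, b)) :=
  (Wcol a c b h).trans (neg_smul qq _).symm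

lemma Wrow (a : ↥A) (b d : ↥B) (h : (b : ℤ) < (d : ℤ)) :
    wg A B (a, b) * wg A B (a, d) = qq⁻¹ • (wg A B (a, d) * wg A B (a, b)) := by
  have h2 := RingQuot.mkAlgHom_rel FF (WRel.row a b d h)
  simpa [wg, map_mul, map_smul] using h2

lemma Wcomm (a c : ↥A) (b d : ↥B) (h1 : (a : ℤ) < (c : ℤ)) (h2 : (b : ℤ) < (d : ℤ)) :
    wg A B (a, b) * wg A B (c, d) = wg A B (c, d) * wg A B (a, b) := by
  have h3 := RingQuot.mkAlgHom_rel FF (WRel.comm a c b d h1 h2)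
  simpa [wg, map_mul] using h3

lemma Wstr (a c : ↥A) (b d : ↥B) (h1 : (c : ℤ) < (a : ℤ)) (h2 : (b : ℤ) < (d : ℤ)) :
    wg A B (a, b) * wg A B (c, d) = wg A B (c, d) * wg A B (a, b) -
      (qq - qq⁻¹) • (wg A B (c, b) * wg A B (a, d)) := by
  have h3 := RingQuot.mkAlgHom_rel FF (WRel.str a c b d h1 h2)
  simpa [wg, map_mul, map_smul, map_sub] using h3

section Core
variable (hiota : iota qq = qq⁻¹)
include hiota

lemma core_cases {u v : FreeAlgebra FF (↥A × ↥B)} (h : WRel A B u v)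
    (lx ly : List (↥A × ↥B)) :
    bar0 iota (wordF lx * u * wordF ly) = bar0 iota (wordF lx * v * wordF ly) := by
  cases h with
  | sq a b =>
    rw [bar0_mid, mul_zero, zero_mul, bar0_zero, Wsq]
    simp
  | col a c b h =>
    have hv : wordF lx * (-(qq • (FreeAlgebra.ι FF ((c, b) : ↥A × ↥B) *
          FreeAlgebra.ι FF ((a, b) : ↥A × ↥B)))) * wordF ly
        = (-qq) • (wordF lx * (FreeAlgebra.ι FF ((c, b) : ↥A × ↥B) *
          FreeAlgebra.ι FF ((a, b) : ↥A × ↥B)) * wordF ly) := by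
      rw [neg_smul]
      simp [mul_smul_comm, smul_mul_assoc]
    rw [hv, bar0_smul, map_neg, hiota, bar0_mid, bar0_mid,
      factor_midswap lx ly ((c, b) : ↥A × ↥B) ((a, b) : ↥A × ↥B), Wcol' a c b h,
      mul_smul_comm, smul_mul_assoc, smul_smul, smul_smul]
    congr 1
    field_simp [qq_ne]
  | row a b d h =>
    have hmid : wordF lx * (qq⁻¹ • (FreeAlgebra.ι FF ((a, d) : ↥A × ↥B) *
          FreeAlgebra.ι FF ((a, b) : ↥A × ↥B))) * wordF ly
        = qq⁻¹ • (wordF lx * (FreeAlgebra.ι FF ((a, d) : ↥A × ↥B) *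
          FreeAlgebra.ι FF ((a, b) : ↥A × ↥B)) * wordF ly) := by
      simp [mul_smul_comm, smul_mul_assoc]
    rw [hmid, bar0_smul, iota_inv_qq iota hiota, bar0_mid, bar0_mid,
      factor_midswap lx ly ((a, d) : ↥A × ↥B) ((a, b) : ↥A × ↥B), Wrow a b d h]
    rw [mul_smul_comm, smul_mul_assoc, smul_smul, smul_smul]
    congr 1
    field_simp [qq_ne]
  | comm a c b d h1 h2 =>
    rw [bar0_mid, bar0_mid,
      factor_midswap lx ly ((c, d) : ↥A × ↥B) ((a, b) : ↥A × ↥B), Wcomm a c b d h1 h2]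
  | str a c b d h1 h2 =>
    have hmid : wordF lx * (FreeAlgebra.ι FF ((c, d) : ↥A × ↥B) *
          FreeAlgebra.ι FF ((a, b) : ↥A × ↥B) -
          (qq - qq⁻¹) • (FreeAlgebra.ι FF ((c, b) : ↥A × ↥B) *
            FreeAlgebra.ι FF ((a, d) : ↥A × ↥B))) * wordF ly
        = (wordF lx * (FreeAlgebra.ι FF ((c, d) : ↥A × ↥B) *
            FreeAlgebra.ι FF ((a, b) : ↥A × ↥B)) * wordF ly) -
          (qq - qq⁻¹) • (wordF lx * (FreeAlgebra.ι FF ((c, b) : ↥A × ↥B) *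
            FreeAlgebra.ι FF ((a, d) : ↥A × ↥B)) * wordF ly) := by
      simp [mul_sub, sub_mul, mul_smul_comm, smul_mul_assoc]
    have hio : iota (qq - qq⁻¹) = qq⁻¹ - qq := by
      rw [map_sub, hiota, iota_inv_qq iota hiota]
    have hf2 : factor (lx ++ ((c, b) : ↥A × ↥B) :: ((a, d) : ↥A × ↥B) :: ly)
        = factor (lx ++ ((a, b) : ↥A × ↥B) :: ((c, d) : ↥A × ↥B) :: ly) := by
      refine factor_congr ?_ ?_
      · simp only [List.map_append, List.map_cons]
        exact List.Perm.append_left _ (List.Perm.swap _ _ _)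
      · simp only [List.map_append, List.map_cons]
        exact List.Perm.refl _
    rw [hmid, bar0_sub, bar0_smul, hio, bar0_mid, bar0_mid, bar0_mid,
      factor_midswap lx ly ((c, d) : ↥A × ↥B) ((a, b) : ↥A × ↥B), hf2,
      Wstr a c b d h1 h2, Wcomm c a b d h1 h2]
    rw [mul_sub, sub_mul, mul_smul_comm, smul_mul_assoc, smul_sub, smul_smul, smul_smul]
    have hc : (qq⁻¹ - qq) * factor (lx ++ ((a, b) : ↥A × ↥B) :: ((c, d) : ↥A × ↥B) :: ly)
        = -(factor (lx ++ ((a, b) : ↥A × ↥B) :: ((c, d) : ↥A × ↥B) :: ly) * (qq - qq⁻¹)) := by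
      ring
    rw [hc, neg_smul, sub_neg_eq_add]
    abel

lemma bar0_mul_congr {u v : FreeAlgebra FF (↥A × ↥B)} (h : WRel A B u v) :
    ∀ x y : FreeAlgebra FF (↥A × ↥B),
      bar0 iota (x * u * y) = bar0 iota (x * v * y) := by
  have step1 : ∀ (lx : List (↥A × ↥B)) (y : FreeAlgebra FF (↥A × ↥B)),
      bar0 iota (wordF lx * u * y) = bar0 iota (wordF lx * v * y) := by
    intro lx y
    obtain ⟨z, rfl⟩ : ∃ z,
        (FreeAlgebra.equivMonoidAlgebraFreeMonoid (R := FF) (X := ↥A × ↥B)).symm z = y :=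
      ⟨_, AlgEquiv.symm_apply_apply _ y⟩
    induction z using MonoidAlgebra.induction_on with
    | of g => rw [symm_ofW]; exact core_cases iota hiota h lx (FreeMonoid.toList g)
    | add f g hf hg => rw [map_add, mul_add, mul_add, bar0_add, bar0_add, hf, hg]
    | smul r f hf => rw [map_smul, mul_smul_comm, mul_smul_comm, bar0_smul, bar0_smul, hf]
  intro x y
  obtain ⟨z, rfl⟩ : ∃ z,
      (FreeAlgebra.equivMonoidAlgebraFreeMonoid (R := FF) (X := ↥A × ↥B)).symm z = x :=
    ⟨_, AlgEquiv.symm_apply_apply _ x⟩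
  induction z using MonoidAlgebra.induction_on with
  | of g => rw [symm_ofW]; exact step1 _ y
  | add f g hf hg =>
    rw [map_add, add_mul, add_mul, add_mul, add_mul, bar0_add, bar0_add, hf, hg]
  | smul r f hf =>
    rw [map_smul, smul_mul_assoc, smul_mul_assoc, smul_mul_assoc, smul_mul_assoc,
      bar0_smul, bar0_smul, hf]

lemma bar0_sound {x y : FreeAlgebra FF (↥A × ↥B)} (h : RingQuot.Rel (WRel A B) x y) :
    bar0 iota x = bar0 iota y := by
  have key : ∀ {a b : FreeAlgebra FF (↥A × ↥B)}, RingQuot.Rel (WRel A B) a b →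
      ∀ x y : FreeAlgebra FF (↥A × ↥B), bar0 iota (x * a * y) = bar0 iota (x * b * y) := by
    intro a b hr
    induction hr with
    | of hw => exact bar0_mul_congr iota hiota hw
    | @add_left a b c _ ih =>
      intro x y
      rw [mul_add x a c, mul_add x b c, add_mul, add_mul, bar0_add, bar0_add, ih x y]
    | @mul_left a b c _ ih =>
      intro x y
      rw [← mul_assoc x a c, ← mul_assoc x b c, mul_assoc (x * a) c y, mul_assoc (x * b) c y]
      exact ih x (c * y)
    | @mul_right a b c _ ih =>
      intro x y
      rw [← mul_assoc x a b, ← mul_assoc x a c]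
      exact ih (x * a) y
  have h2 := key h 1 1
  simpa only [one_mul, mul_one] using h2

end Core

/-- The bar map on `W(A,B)`. -/
def barAux (hiota : iota qq = qq⁻¹) : WAlg A B → WAlg A B :=
  fun z => Quot.lift (bar0 iota) (fun _ _ h => bar0_sound iota hiota h) z.toQuot

lemma mk_quot (x : FreeAlgebra FF (↥A × ↥B)) :
    RingQuot.mkAlgHom FF (WRel A B) x = ⟨Quot.mk _ x⟩ := by
  simp [RingQuot.mkAlgHom_def, RingQuot.mkRingHom_def]

lemma barAux_mk (hiota : iota qq = qq⁻¹) (x : FreeAlgebra FF (↥A × ↥B)) :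
    barAux iota hiota (RingQuot.mkAlgHom FF (WRel A B) x) = bar0 iota x := by
  rw [mk_quot]
  rfl

lemma mem_span_wgp (z : WAlg A B) :
    z ∈ Submodule.span FF (Set.range (wgp (A := A) (B := B))) := by
  obtain ⟨x, rfl⟩ := RingQuot.mkAlgHom_surjective FF (WRel A B) z
  obtain ⟨z, rfl⟩ : ∃ z,
      (FreeAlgebra.equivMonoidAlgebraFreeMonoid (R := FF) (X := ↥A × ↥B)).symm z = x :=
    ⟨_, AlgEquiv.symm_apply_apply _ x⟩
  induction z using MonoidAlgebra.induction_on with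
  | of g => rw [symm_ofW, mkAlgHom_wordF]; exact Submodule.subset_span ⟨_, rfl⟩
  | add f g hf hg => rw [map_add, map_add]; exact Submodule.add_mem _ hf hg
  | smul r f hf => rw [map_smul, map_smul]; exact Submodule.smul_mem _ _ hf

lemma barprop_zero {bar : WAlg A B → WAlg A B} (h : BarProp A B iota bar) : bar 0 = 0 := by
  have h2 := h.1 0 0
  rw [add_zero] at h2
  exact (add_eq_right.mp h2.symm)

lemma barProp_list {bar : WAlg A B → WAlg A B} (h : BarProp A B iota bar)
    (l : List (↥A × ↥B)) :
    bar (wgp l) = factor l • wgp l.reverse := by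
  have h3 := h.2.2 l.length l.get
  have e1 : (List.ofFn fun m => wg A B (l.get m)) = l.map (wg A B) := by
    conv_rhs => rw [← List.ofFn_get l, List.map_ofFn]
    rfl
  have e2' : (List.ofFn fun m => ((l.get m).1 : ℤ)) = l.map fun p => ((p.1 : ℤ)) := by
    conv_rhs => rw [← List.ofFn_get l, List.map_ofFn]
    rfl
  have e3' : (List.ofFn fun m => ((l.get m).2 : ℤ)) = l.map fun p => ((p.2 : ℤ)) := by
    conv_rhs => rw [← List.ofFn_get l, List.map_ofFn]
    rfl
  have e2 : lcount (fun m => ((l.get m).1 : ℤ)) = lpc (l.map fun p => ((p.1 : ℤ))) := by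
    rw [← lp_ofFn]
    exact congrArg lpc e2'
  have e3 : lcount (fun m => ((l.get m).2 : ℤ)) = lpc (l.map fun p => ((p.2 : ℤ))) := by
    rw [← lp_ofFn]
    exact congrArg lpc e3'
  rw [e1, e2, e3] at h3
  rw [wgp, h3, factor]
  congr 1
  rw [wgp]
  simp [List.map_reverse]

lemma barAux_barProp (hiota : iota qq = qq⁻¹) :
    BarProp A B iota (barAux (A := A) (B := B) iota hiota) := by
  refine ⟨?_, ?_, ?_⟩
  · intro z w
    obtain ⟨x, rfl⟩ := RingQuot.mkAlgHom_surjective FF (WRel A B) z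
    obtain ⟨y, rfl⟩ := RingQuot.mkAlgHom_surjective FF (WRel A B) w
    rw [← map_add, barAux_mk, barAux_mk, barAux_mk, bar0_add]
  · intro f z
    obtain ⟨x, rfl⟩ := RingQuot.mkAlgHom_surjective FF (WRel A B) z
    rw [← map_smul, barAux_mk, barAux_mk, bar0_smul]
  · intro k g
    have e0 : (List.ofFn fun m : Fin k => wg A B (g m)) = (List.ofFn g).map (wg A B) := by
      rw [List.map_ofFn]
      rfl
    rw [e0]
    show barAux iota hiota (wgp (List.ofFn g)) = _
    rw [← mkAlgHom_wordF, barAux_mk, bar0_word, barW]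
    have ec : (List.ofFn g).map (fun p : ↥A × ↥B => ((p.1 : ℤ)))
        = List.ofFn (fun m => ((g m).1 : ℤ)) := by
      rw [List.map_ofFn]
      rfl
    have er : (List.ofFn g).map (fun p : ↥A × ↥B => ((p.2 : ℤ)))
        = List.ofFn (fun m => ((g m).2 : ℤ)) := by
      rw [List.map_ofFn]
      rfl
    rw [factor, ec, er, lp_ofFn, lp_ofFn]
    congr 1
    rw [wgp]
    simp [List.map_reverse]

lemma bar_eq {b1 b2 : WAlg A B → WAlg A B}
    (h1 : BarProp A B iota b1) (h2 : BarProp A B iota b2) : b1 = b2 := by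
  funext z
  induction mem_span_wgp z using Submodule.span_induction with
  | mem x hx =>
    obtain ⟨l, rfl⟩ := hx
    rw [barProp_list iota h1, barProp_list iota h2]
  | zero => rw [barprop_zero iota h1, barprop_zero iota h2]
  | add x y hx hy ihx ihy => rw [h1.1, h2.1, ihx, ihy]
  | smul a x hx ih => rw [h1.2.1, h2.2.1, ih]

lemma bar_invol (hiota : iota qq = qq⁻¹) {bar : WAlg A B → WAlg A B}
    (h : BarProp A B iota bar) (z : WAlg A B) : bar (bar z) = z := by
  induction mem_span_wgp z using Submodule.span_induction with
  | mem x hx =>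
    obtain ⟨l, rfl⟩ := hx
    rw [barProp_list iota h l, h.2.1, barProp_list iota h l.reverse, factor_reverse,
      List.reverse_reverse, smul_smul]
    have hs : iota (factor (A := A) (B := B) l) * factor l = 1 := by
      rw [factor]
      exact iota_scal iota hiota _ _
    rw [hs, one_smul]
  | zero => rw [barprop_zero iota h, barprop_zero iota h]
  | add x y hx hy ihx ihy => rw [h.1, h.1, ihx, ihy]
  | smul a x hx ih => rw [h.2.1, h.2.1, iota_iota iota hiota, ih]


end Aux

theorem statement9 (A B : Set ℤ) (hA : A.Nonempty) (hB : B.Nonempty)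
    (hAint : ∀ x ∈ A, ∀ y ∈ A, ∀ z : ℤ, x ≤ z → z ≤ y → z ∈ A)
    (hBint : ∀ x ∈ B, ∀ y ∈ B, ∀ z : ℤ, x ≤ z → z ≤ y → z ∈ B)
    (iota : FF ≃+* FF) (hiota : iota qq = qq⁻¹) :
    (∃! bar : WAlg A B → WAlg A B, BarProp A B iota bar) ∧
    (∀ bar : WAlg A B → WAlg A B, BarProp A B iota bar → ∀ x : WAlg A B, bar (bar x) = x) := by
  have hbp : BarProp A B iota (barAux iota hiota) := barAux_barProp iota hiota
  constructor
  · exact ⟨barAux iota hiota, hbp, fun y hy => bar_eq iota hy hbp⟩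
  · intro bar hb x
    exact bar_invol iota hiota hb x

end
end
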